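/- Let n ≥ 3, R > 0, C ≥ 0, ε > 0 and τ > (n−2)/2. Let a : ℝⁿ → Matrix (Fin n) (Fin n) ℝ be continuously differentiable on E_R with |a_{ij}(x)| ≤ C‖x‖^(−τ) and |∂_k a_{ij}(x)| ≤ C‖x‖^(−τ−1) on E_R, and set g_{ij} = δ_{ij} + a_{ij}. Let f : ℝⁿ → ℝ be continuously differentiable on E_R with f(x) ≥ ε, |f(x) − 1| ≤ C‖x‖^(−τ) and ‖∇f(x)‖ ≤ C‖x‖^(−τ−1) on E_R. Let θ : ℝⁿ → ℝⁿ be continuous on E_R with ‖θ(x)‖ ≤ C‖x‖^(−τ−1) on E_R. Then the difference [ 𝔪_r(f·g) − 2(n−1)·∫_{S_r} ⟨θ(x) − ∇f(x)/(2 f(x)), ν(x)⟩ dσ(x) ] − [ 𝔪_r(g) − 2(n−1)·∫_{S_r} ⟨θ(x), ν(x)⟩ dσ(x) ] tends to 0 as r → ∞. -/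

import Mathlib

/-!
Write `g = 1 + a`. Differentiating the conformal factor, the mass integrand of `f • g` is `f` times
that of `g` plus terms containing `df`; their `δ`-part is `(1 - n) ∂_ν f`, and it is cancelled to
first order by the change `-(1/2) df / f` of the Lee form. What survives is quadratic in the
decaying quantities `f - 1`, `a`, `da`, `df`, hence `O(r ^ (-2τ - 1))` on `S_r`. Since
`μH[n-1](S_r) = r ^ (n - 1) μH[n-1](S_1)` with `S_1` a finite union of Lipschitz images of cubes,
the integral over `S_r` is `O(r ^ (n - 2 - 2τ))`, which tends to `0` because `τ > (n - 2) / 2`.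
-/

open MeasureTheory Filter Metric

/-- The mass surface integral at radius `r` of a matrix-valued field `G` on `ℝⁿ`:
`𝔪_r(G) = ∫_{S_r} Σ_{i,j} (∂_i G_{ij} - ∂_j G_{ii}) ν_j dσ`, where `σ` is the
`(n-1)`-dimensional Hausdorff measure and `ν(x) = x/‖x‖`. -/
noncomputable def massSurfaceIntegral (n : ℕ)
    (G : EuclideanSpace ℝ (Fin n) → Matrix (Fin n) (Fin n) ℝ) (r : ℝ) : ℝ :=
  ∫ x in Metric.sphere (0 : EuclideanSpace ℝ (Fin n)) r,
    ∑ i : Fin n, ∑ j : Fin n,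
      (fderiv ℝ (fun y => G y i j) x (EuclideanSpace.single i 1) -
        fderiv ℝ (fun y => G y i i) x (EuclideanSpace.single j 1)) * (x j / ‖x‖)
    ∂(μH[(n : ℝ) - 1])

open scoped Pointwise Topology

section HausdorffSphere

variable {E : Type*} [NormedAddCommGroup E] [NormedSpace ℝ E]

lemma lipschitzOnWith_inv_norm_smul :
    LipschitzOnWith 2 (fun x : E => ‖x‖⁻¹ • x) {x | 1 ≤ ‖x‖} := by
  refine LipschitzOnWith.of_dist_le_mul fun x (hx : 1 ≤ ‖x‖) y (hy : 1 ≤ ‖y‖) => ?_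
  have hx0 : 0 < ‖x‖ := one_pos.trans_le hx
  have hy0 : 0 < ‖y‖ := one_pos.trans_le hy
  have h₁ : ‖‖x‖⁻¹ • (x - y)‖ ≤ ‖x - y‖ := by
    rw [norm_smul, norm_inv, norm_norm]
    exact mul_le_of_le_one_left (norm_nonneg _) (inv_le_one_of_one_le₀ hx)
  have h₂ : ‖(‖x‖⁻¹ - ‖y‖⁻¹) • y‖ ≤ ‖x - y‖ := by
    rw [norm_smul, Real.norm_eq_abs, inv_sub_inv hx0.ne' hy0.ne', abs_div, abs_mul,
      abs_of_pos hx0, abs_of_pos hy0, div_mul_eq_mul_div, mul_div_mul_right _ _ hy0.ne']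
    exact (div_le_self (abs_nonneg _) hx).trans
      ((abs_norm_sub_norm_le y x).trans_eq (norm_sub_rev y x))
  calc dist (‖x‖⁻¹ • x) (‖y‖⁻¹ • y)
      = ‖‖x‖⁻¹ • (x - y) + (‖x‖⁻¹ - ‖y‖⁻¹) • y‖ := by
        rw [dist_eq_norm, smul_sub, sub_smul, sub_add_sub_cancel]
    _ ≤ 2 * dist x y := by
        rw [dist_eq_norm]
        linarith [norm_add_le (‖x‖⁻¹ • (x - y)) ((‖x‖⁻¹ - ‖y‖⁻¹) • y)]

variable [MeasurableSpace E] [BorelSpace E]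

lemma hausdorffMeasure_sphere_eq_rpow_mul {d : ℝ} (hd : 0 ≤ d) {r : ℝ} (hr : 0 < r) :
    μH[d] (sphere (0 : E) r) = ENNReal.ofReal r ^ d * μH[d] (sphere (0 : E) 1) := by
  have hsphere : sphere (0 : E) r = r • sphere 0 1 := by
    rw [smul_sphere' hr.ne', smul_zero, Real.norm_of_nonneg hr.le, mul_one]
  rw [hsphere, Measure.hausdorffMeasure_smul₀ hd hr.ne', ENNReal.smul_def, smul_eq_mul,
    ENNReal.coe_rpow_of_nonneg _ hd, ← Real.enorm_eq_ofReal hr.le]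
  rfl

end HausdorffSphere

lemma hausdorffMeasure_unitSphere_lt_top (m : ℕ) :
    μH[(m : ℝ)] (sphere (0 : EuclideanSpace ℝ (Fin (m + 1))) 1) < ⊤ := by
  set face : Fin (m + 1) → ℝ → (Fin m → ℝ) → EuclideanSpace ℝ (Fin (m + 1)) :=
    fun k s y => WithLp.toLp 2 (k.insertNth s y)
  set Q : Set (Fin m → ℝ) := closedBall 0 1
  set I : Set (Fin (m + 1) × ℝ) := Set.univ ×ˢ {-1, 1}
  -- dividing a point of the sphere by its largest coordinate lands on a face of the cube
  have hcover : sphere 0 1 ⊆ ⋃ p ∈ I, (fun x => ‖x‖⁻¹ • x) ∘ face p.1 p.2 '' Q := by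
    intro x hx
    rw [mem_sphere_zero_iff_norm] at hx
    obtain ⟨k, hk⟩ := Finite.exists_max fun i => |x i|
    set c := |x k|
    have hc : 0 < c := by
      refine (abs_nonneg _).lt_of_ne fun hc => ?_
      have hx0 : x = 0 := by
        ext i
        exact abs_nonpos_iff.mp ((hk i).trans hc.symm.le)
      simp [hx0] at hx
    set v : Fin (m + 1) → ℝ := fun j => x j / c
    have hv : |v k| = 1 := by simp only [v, abs_div, abs_abs, div_self hc.ne', c]
    refine Set.mem_biUnion (x := (k, v k)) ⟨Set.mem_univ _, ?_⟩ ⟨k.removeNth v, ?_, ?_⟩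
    · rcases abs_eq zero_le_one |>.mp hv with h | h <;> simp [h]
    · rw [mem_closedBall_zero_iff, pi_norm_le_iff_of_nonneg zero_le_one]
      intro i
      rw [Real.norm_eq_abs, Fin.removeNth, abs_div, abs_abs]
      exact div_le_one_of_le₀ (hk _) hc.le
    · have hface : face k (v k) (k.removeNth v) = c⁻¹ • x := by
        ext j
        simp [face, v, div_eq_inv_mul]
      simp only [Function.comp_apply, hface, norm_smul, hx, norm_inv, Real.norm_eq_abs,
        abs_of_pos hc, mul_one, inv_inv, smul_smul, mul_inv_cancel₀ hc.ne', one_smul]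
  have hQ : μH[(m : ℝ)] Q < ⊤ := by
    have hvol : (μH[(m : ℝ)] : Measure (Fin m → ℝ)) = volume := by
      simpa using hausdorffMeasure_pi_real (ι := Fin m)
    rw [hvol]
    exact (isCompact_closedBall 0 1).measure_lt_top
  refine (measure_mono hcover).trans_lt <|
    measure_biUnion_lt_top (Set.finite_univ.prod (Set.toFinite _)) fun p hp => ?_
  have hs : |p.2| = 1 := by
    obtain ⟨-, h | h⟩ := hp <;> rw [h] <;> norm_num
  have hface : LipschitzWith _ (face p.1 p.2) :=
    (PiLp.lipschitzWith_toLp 2 _).comp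
      (Isometry.of_dist_eq fun y z => by simp [Fin.dist_insertNth_insertNth]).lipschitz
  have hmaps : Set.MapsTo (face p.1 p.2) Q {x | 1 ≤ ‖x‖} := fun y _ =>
    hs.symm.le.trans <| by simpa [face] using PiLp.norm_apply_le (face p.1 p.2 y) p.1
  refine ((lipschitzOnWith_inv_norm_smul.comp hface.lipschitzOnWith hmaps).hausdorffMeasure_image_le
    (Nat.cast_nonneg m)).trans_lt (ENNReal.mul_lt_top ?_ hQ)
  exact ENNReal.rpow_lt_top_of_nonneg (Nat.cast_nonneg m) ENNReal.coe_ne_top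

lemma hausdorffMeasure_sphere_lt_top (n : ℕ) {r : ℝ} (hr : 0 < r) :
    μH[(n : ℝ) - 1] (sphere (0 : EuclideanSpace ℝ (Fin n)) r) < ⊤ := by
  rcases n with _ | m
  · simp [sphere_eq_empty_of_subsingleton hr.ne']
  · rw [Nat.cast_succ, add_sub_cancel_right,
      hausdorffMeasure_sphere_eq_rpow_mul (Nat.cast_nonneg m) hr]
    exact ENNReal.mul_lt_top (ENNReal.rpow_lt_top_of_nonneg (Nat.cast_nonneg m)
      ENNReal.ofReal_ne_top) (hausdorffMeasure_unitSphere_lt_top m)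

lemma hausdorffMeasure_real_sphere_eq_rpow_mul (n : ℕ) {r : ℝ} (hr : 0 < r) :
    (μH[(n : ℝ) - 1]).real (sphere (0 : EuclideanSpace ℝ (Fin n)) r) =
      r ^ ((n : ℝ) - 1) * (μH[(n : ℝ) - 1]).real (sphere (0 : EuclideanSpace ℝ (Fin n)) 1) := by
  rcases n with _ | m
  · simp [sphere_eq_empty_of_subsingleton hr.ne', sphere_eq_empty_of_subsingleton one_ne_zero]
  · rw [Nat.cast_succ, add_sub_cancel_right, measureReal_def, measureReal_def,
      hausdorffMeasure_sphere_eq_rpow_mul (Nat.cast_nonneg m) hr, ENNReal.toReal_mul,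
      ← ENNReal.toReal_rpow, ENNReal.toReal_ofReal hr.le]

section Decay

variable {n : ℕ}

lemma ContinuousOn.integrableOn_sphere {h : EuclideanSpace ℝ (Fin n) → ℝ} {r : ℝ}
    (hh : ContinuousOn h (sphere 0 r)) (hr : 0 < r) :
    IntegrableOn h (sphere 0 r) μH[(n : ℝ) - 1] :=
  hh.integrableOn_of_subset_isCompact (isCompact_sphere 0 r) isClosed_sphere.measurableSet
    subset_rfl (hausdorffMeasure_sphere_lt_top n hr).ne

theorem tendsto_setIntegral_sphere_of_abs_le {h : EuclideanSpace ℝ (Fin n) → ℝ} {R K p : ℝ}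
    (hp : (n : ℝ) - 1 < p) (hh : ∀ x, R ≤ ‖x‖ → |h x| ≤ K * ‖x‖ ^ (-p)) :
    Tendsto (fun r => ∫ x in sphere 0 r, h x ∂μH[(n : ℝ) - 1]) atTop (𝓝 0) := by
  set M := (μH[(n : ℝ) - 1]).real (sphere (0 : EuclideanSpace ℝ (Fin n)) 1)
  have hlim : Tendsto (fun r : ℝ => K * M * r ^ (-(p - (n - 1)))) atTop (𝓝 0) := by
    simpa using (tendsto_rpow_neg_atTop (sub_pos.mpr hp)).const_mul (K * M)
  refine squeeze_zero_norm' ?_ hlim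
  filter_upwards [eventually_ge_atTop R, eventually_gt_atTop 0] with r hR hr
  calc ‖∫ x in sphere 0 r, h x ∂μH[(n : ℝ) - 1]‖
      ≤ K * r ^ (-p) * (μH[(n : ℝ) - 1]).real (sphere (0 : EuclideanSpace ℝ (Fin n)) r) :=
        norm_setIntegral_le_of_norm_le_const (hausdorffMeasure_sphere_lt_top n hr) fun x hx => by
          rw [mem_sphere_zero_iff_norm] at hx
          simpa [hx] using hh x (hx ▸ hR)
    _ = K * M * r ^ (-(p - (n - 1))) := by
        rw [hausdorffMeasure_real_sphere_eq_rpow_mul n hr, neg_sub', sub_neg_eq_add, add_comm,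
          Real.rpow_add hr]
        ring

end Decay

noncomputable def massIntegrand (n : ℕ) (G : EuclideanSpace ℝ (Fin n) → Matrix (Fin n) (Fin n) ℝ)
    (x : EuclideanSpace ℝ (Fin n)) : ℝ :=
  ∑ i, ∑ j, (fderiv ℝ (fun y => G y i j) x (EuclideanSpace.single i 1) -
    fderiv ℝ (fun y => G y i i) x (EuclideanSpace.single j 1)) * (x j / ‖x‖)

noncomputable def conformalMassTerm (n : ℕ) (A : Matrix (Fin n) (Fin n) ℝ)
    (L : EuclideanSpace ℝ (Fin n) →L[ℝ] ℝ) (x : EuclideanSpace ℝ (Fin n)) : ℝ :=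
  ∑ i, ∑ j, (A i j * L (EuclideanSpace.single i 1) - A i i * L (EuclideanSpace.single j 1)) *
    (x j / ‖x‖)

/-- The integrand of the mass of a Weyl structure with adapted metric `G` and Lee form `θ`. -/
noncomputable def weylMassIntegrand (n : ℕ)
    (G : EuclideanSpace ℝ (Fin n) → Matrix (Fin n) (Fin n) ℝ)
    (θ : EuclideanSpace ℝ (Fin n) → EuclideanSpace ℝ (Fin n)) (x : EuclideanSpace ℝ (Fin n)) : ℝ :=
  massIntegrand n G x - 2 * ((n : ℝ) - 1) * inner ℝ (θ x) (‖x‖⁻¹ • x)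

section MassIntegrand

variable {n : ℕ} {G : EuclideanSpace ℝ (Fin n) → Matrix (Fin n) (Fin n) ℝ}
  {a : EuclideanSpace ℝ (Fin n) → Matrix (Fin n) (Fin n) ℝ} {f : EuclideanSpace ℝ (Fin n) → ℝ}
  {x : EuclideanSpace ℝ (Fin n)}

lemma massSurfaceIntegral_eq_integral_massIntegrand (r : ℝ) :
    massSurfaceIntegral n G r = ∫ x in sphere 0 r, massIntegrand n G x ∂μH[(n : ℝ) - 1] :=
  rfl

lemma sum_apply_single_mul (L : EuclideanSpace ℝ (Fin n) →L[ℝ] ℝ) (y : EuclideanSpace ℝ (Fin n)) :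
    ∑ j, L (EuclideanSpace.single j 1) * y j = L y := by
  conv_rhs => rw [← (EuclideanSpace.basisFun (Fin n) ℝ).sum_repr y]
  simp [map_sum, mul_comm]

lemma fderiv_smul_matrix_apply {i j : Fin n} (hf : DifferentiableAt ℝ f x)
    (hG : DifferentiableAt ℝ (fun y => G y i j) x) :
    fderiv ℝ (fun y => (f y • G y) i j) x =
      f x • fderiv ℝ (fun y => G y i j) x + G x i j • fderiv ℝ f x := by
  simp only [Matrix.smul_apply, smul_eq_mul]
  exact fderiv_fun_mul hf hG

lemma fderiv_one_add_matrix_apply (i j : Fin n) :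
    (fun x => fderiv ℝ (fun y => (1 + a y) i j) x) = fun x => fderiv ℝ (fun y => a y i j) x := by
  simp only [Matrix.add_apply, fderiv_const_add]

lemma massIntegrand_one_add : massIntegrand n (fun y => 1 + a y) = massIntegrand n a := by
  funext x
  simp only [massIntegrand, Matrix.add_apply, fderiv_const_add]

lemma massIntegrand_smul (hf : DifferentiableAt ℝ f x)
    (hG : ∀ i j, DifferentiableAt ℝ (fun y => G y i j) x) :
    massIntegrand n (fun y => f y • G y) x =
      f x * massIntegrand n G x + conformalMassTerm n (G x) (fderiv ℝ f x) x := by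
  simp only [massIntegrand, conformalMassTerm, fderiv_smul_matrix_apply hf (hG _ _),
    Finset.mul_sum, ← Finset.sum_add_distrib]
  refine Finset.sum_congr rfl fun i _ => Finset.sum_congr rfl fun j _ => ?_
  simp only [add_apply, smul_apply, smul_eq_mul]
  ring

lemma conformalMassTerm_add (A B : Matrix (Fin n) (Fin n) ℝ)
    (L : EuclideanSpace ℝ (Fin n) →L[ℝ] ℝ) :
    conformalMassTerm n (A + B) L x = conformalMassTerm n A L x + conformalMassTerm n B L x := by
  simp only [conformalMassTerm, ← Finset.sum_add_distrib, Matrix.add_apply]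
  refine Finset.sum_congr rfl fun i _ => Finset.sum_congr rfl fun j _ => ?_
  ring

lemma conformalMassTerm_one (L : EuclideanSpace ℝ (Fin n) →L[ℝ] ℝ) :
    conformalMassTerm n 1 L x = (1 - n) * L (‖x‖⁻¹ • x) := by
  have hν : ∑ j, L (EuclideanSpace.single j 1) * (x j / ‖x‖) = L (‖x‖⁻¹ • x) := by
    simp only [← sum_apply_single_mul L (‖x‖⁻¹ • x), PiLp.smul_apply, smul_eq_mul,
      div_eq_inv_mul]
  simp only [conformalMassTerm, Matrix.one_apply, ite_mul, one_mul, zero_mul, sub_mul,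
    Finset.sum_sub_distrib, Finset.sum_ite_eq, Finset.mem_univ, if_true, Finset.sum_const,
    Finset.card_univ, Fintype.card_fin, nsmul_eq_mul, hν]

lemma abs_sum_sum_mul_div_norm_le {c : Fin n → Fin n → ℝ} {b : ℝ} (hc : ∀ i j, |c i j| ≤ b)
    (x : EuclideanSpace ℝ (Fin n)) :
    |∑ i, ∑ j, c i j * (x j / ‖x‖)| ≤ n ^ 2 * b := by
  have hν : ∀ j, |x j / ‖x‖| ≤ 1 := fun j => by
    rw [abs_div, abs_norm]
    exact div_le_one_of_le₀ (PiLp.norm_apply_le x j) (norm_nonneg x)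
  calc |∑ i, ∑ j, c i j * (x j / ‖x‖)| ≤ ∑ _i : Fin n, ∑ _j : Fin n, b := by
        refine (Finset.abs_sum_le_sum_abs _ _).trans <| Finset.sum_le_sum fun i _ =>
          (Finset.abs_sum_le_sum_abs _ _).trans <| Finset.sum_le_sum fun j _ => ?_
        rw [abs_mul]
        exact (mul_le_of_le_one_right (abs_nonneg _) (hν j)).trans (hc i j)
    _ = n ^ 2 * b := by simp only [Finset.sum_const, Finset.card_univ, Fintype.card_fin,
          nsmul_eq_mul]; ring

lemma abs_massIntegrand_le {B : ℝ}
    (hB : ∀ i j k, |fderiv ℝ (fun y => G y i j) x (EuclideanSpace.single k 1)| ≤ B) :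
    |massIntegrand n G x| ≤ 2 * n ^ 2 * B := by
  have := abs_sum_sum_mul_div_norm_le (b := 2 * B) (c := fun i j =>
    fderiv ℝ (fun y => G y i j) x (EuclideanSpace.single i 1) -
      fderiv ℝ (fun y => G y i i) x (EuclideanSpace.single j 1))
    (fun i j => (abs_sub _ _).trans (by linarith [hB i j i, hB i i j])) x
  rw [massIntegrand]
  linarith

lemma abs_conformalMassTerm_le {A : Matrix (Fin n) (Fin n) ℝ} {α : ℝ} (hA : ∀ i j, |A i j| ≤ α)
    (L : EuclideanSpace ℝ (Fin n) →L[ℝ] ℝ) (x : EuclideanSpace ℝ (Fin n)) :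
    |conformalMassTerm n A L x| ≤ 2 * n ^ 2 * α * ‖L‖ := by
  have hL : ∀ k, |L (EuclideanSpace.single k 1)| ≤ ‖L‖ := fun k => by
    simpa using L.le_opNorm (EuclideanSpace.single k (1 : ℝ))
  have hAL : ∀ i j k, |A i j * L (EuclideanSpace.single k 1)| ≤ α * ‖L‖ := fun i j k => by
    rw [abs_mul]
    exact mul_le_mul (hA i j) (hL k) (abs_nonneg _) ((abs_nonneg _).trans (hA i j))
  have := abs_sum_sum_mul_div_norm_le (b := 2 * (α * ‖L‖)) (c := fun i j =>
    A i j * L (EuclideanSpace.single i 1) - A i i * L (EuclideanSpace.single j 1))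
    (fun i j => (abs_sub _ _).trans (by linarith [hAL i j i, hAL i i j])) x
  rw [conformalMassTerm]
  linarith

end MassIntegrand

section Conformal

variable {n : ℕ} {a : EuclideanSpace ℝ (Fin n) → Matrix (Fin n) (Fin n) ℝ}
  {f : EuclideanSpace ℝ (Fin n) → ℝ} {θ : EuclideanSpace ℝ (Fin n) → EuclideanSpace ℝ (Fin n)}
  {x : EuclideanSpace ℝ (Fin n)}

lemma weylMassIntegrand_conformal_sub (hf : DifferentiableAt ℝ f x) (hfx : f x ≠ 0)
    (ha : ∀ i j, DifferentiableAt ℝ (fun y => a y i j) x) :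
    weylMassIntegrand n (fun y => f y • (1 + a y))
          (fun y => θ y - (1 / (2 * f y)) • gradient f y) x -
        weylMassIntegrand n (fun y => 1 + a y) θ x =
      (f x - 1) * massIntegrand n a x + conformalMassTerm n (a x) (fderiv ℝ f x) x +
        ((n : ℝ) - 1) * (1 / f x - 1) * fderiv ℝ f x (‖x‖⁻¹ • x) := by
  have h1a : ∀ i j, DifferentiableAt ℝ (fun y => (1 + a y) i j) x :=
    fun i j => (ha i j).const_add _
  simp only [weylMassIntegrand, massIntegrand_smul hf h1a, massIntegrand_one_add,
    conformalMassTerm_add, conformalMassTerm_one, inner_sub_left, real_inner_smul_left, gradient,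
    InnerProductSpace.toDual_symm_apply]
  field_simp
  ring

lemma abs_weylMassIntegrand_conformal_sub_le {ε α β : ℝ} (hf : DifferentiableAt ℝ f x)
    (ha : ∀ i j, DifferentiableAt ℝ (fun y => a y i j) x) (hε : 0 < ε) (hfx : ε ≤ f x)
    (hf1 : |f x - 1| ≤ α) (hdf : ‖fderiv ℝ f x‖ ≤ β) (hab : ∀ i j, |a x i j| ≤ α)
    (hda : ∀ i j k, |fderiv ℝ (fun y => a y i j) x (EuclideanSpace.single k 1)| ≤ β) :
    |weylMassIntegrand n (fun y => f y • (1 + a y))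
          (fun y => θ y - (1 / (2 * f y)) • gradient f y) x -
        weylMassIntegrand n (fun y => 1 + a y) θ x| ≤
      (4 * n ^ 2 + |(n : ℝ) - 1| / ε) * α * β := by
  rw [weylMassIntegrand_conformal_sub hf (hε.trans_le hfx).ne' ha]
  have hα : 0 ≤ α := (abs_nonneg _).trans hf1
  have h₁ : |(f x - 1) * massIntegrand n a x| ≤ α * (2 * n ^ 2 * β) := by
    rw [abs_mul]
    exact mul_le_mul hf1 (abs_massIntegrand_le hda) (abs_nonneg _) hα
  have h₂ : |conformalMassTerm n (a x) (fderiv ℝ f x) x| ≤ 2 * n ^ 2 * α * β :=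
    (abs_conformalMassTerm_le hab _ x).trans (mul_le_mul_of_nonneg_left hdf (by positivity))
  have hinv : |1 / f x - 1| ≤ α / ε := by
    have hf0 : 0 < f x := hε.trans_le hfx
    rw [show 1 / f x - 1 = (1 - f x) / f x by field_simp, abs_div, abs_sub_comm, abs_of_pos hf0]
    exact div_le_div₀ hα hf1 hε hfx
  have hν : |fderiv ℝ f x (‖x‖⁻¹ • x)| ≤ β := by
    refine ((fderiv ℝ f x).le_opNorm _).trans ?_
    refine (mul_le_of_le_one_right (norm_nonneg _) ?_).trans hdf
    rw [norm_smul, norm_inv, norm_norm]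
    exact inv_mul_le_one_of_le₀ le_rfl (norm_nonneg _)
  have h₃ : |((n : ℝ) - 1) * (1 / f x - 1) * fderiv ℝ f x (‖x‖⁻¹ • x)| ≤
      |(n : ℝ) - 1| * (α / ε) * β := by
    rw [abs_mul, abs_mul]
    gcongr
  calc _ ≤ α * (2 * n ^ 2 * β) + 2 * n ^ 2 * α * β + |(n : ℝ) - 1| * (α / ε) * β :=
        (abs_add_three _ _ _).trans (by gcongr)
    _ = (4 * n ^ 2 + |(n : ℝ) - 1| / ε) * α * β := by ring

end Conformal

section Continuity

variable {n : ℕ} {G : EuclideanSpace ℝ (Fin n) → Matrix (Fin n) (Fin n) ℝ}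
  {θ : EuclideanSpace ℝ (Fin n) → EuclideanSpace ℝ (Fin n)} {s : Set (EuclideanSpace ℝ (Fin n))}

lemma continuousOn_massIntegrand
    (hG : ∀ i j, ContinuousOn (fun x => fderiv ℝ (fun y => G y i j) x) s) (hs : 0 ∉ s) :
    ContinuousOn (massIntegrand n G) s := by
  have hν : ∀ j : Fin n, ContinuousOn (fun x : EuclideanSpace ℝ (Fin n) => x j / ‖x‖) s :=
    fun j => (PiLp.continuous_apply 2 _ j).continuousOn.div continuous_norm.continuousOn
      fun x hx => norm_ne_zero_iff.mpr (ne_of_mem_of_not_mem hx hs)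
  exact continuousOn_finsetSum _ fun i _ => continuousOn_finsetSum _ fun j _ =>
    (((hG i j).clm_apply continuousOn_const).sub ((hG i i).clm_apply continuousOn_const)).mul (hν j)

lemma continuousOn_massIntegrand_smul {f : EuclideanSpace ℝ (Fin n) → ℝ}
    (hf : ∀ x ∈ s, DifferentiableAt ℝ f x) (hf' : ContinuousOn (fun x => fderiv ℝ f x) s)
    (hG : ∀ x ∈ s, ∀ i j, DifferentiableAt ℝ (fun y => G y i j) x)
    (hG' : ∀ i j, ContinuousOn (fun x => fderiv ℝ (fun y => G y i j) x) s) (hs : 0 ∉ s) :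
    ContinuousOn (massIntegrand n fun y => f y • G y) s := by
  refine continuousOn_massIntegrand (fun i j => ?_) hs
  have hfc : ContinuousOn f s := fun x hx => (hf x hx).continuousAt.continuousWithinAt
  have hGc : ContinuousOn (fun x => G x i j) s :=
    fun x hx => (hG x hx i j).continuousAt.continuousWithinAt
  exact ((hfc.smul (hG' i j)).add (hGc.smul hf')).congr
    fun x hx => fderiv_smul_matrix_apply (hf x hx) (hG x hx i j)

lemma continuousOn_inner_inv_norm_smul (hθ : ContinuousOn θ s) (hs : 0 ∉ s) :
    ContinuousOn (fun x => inner ℝ (θ x) (‖x‖⁻¹ • x)) s :=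
  hθ.inner <| (continuous_norm.continuousOn.inv₀ fun _ hx => norm_ne_zero_iff.mpr
    (ne_of_mem_of_not_mem hx hs)).smul continuousOn_id

lemma continuousOn_weylMassIntegrand (hM : ContinuousOn (massIntegrand n G) s)
    (hθ : ContinuousOn θ s) (hs : 0 ∉ s) : ContinuousOn (weylMassIntegrand n G θ) s :=
  hM.sub (continuousOn_const.mul (continuousOn_inner_inv_norm_smul hθ hs))

lemma massSurfaceIntegral_sub_integral_inner {r : ℝ} (hr : 0 < r)
    (hM : ContinuousOn (massIntegrand n G) (sphere 0 r)) (hθ : ContinuousOn θ (sphere 0 r)) :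
    massSurfaceIntegral n G r -
        2 * ((n : ℝ) - 1) * ∫ x in sphere 0 r, inner ℝ (θ x) (‖x‖⁻¹ • x) ∂μH[(n : ℝ) - 1] =
      ∫ x in sphere 0 r, weylMassIntegrand n G θ x ∂μH[(n : ℝ) - 1] := by
  have hθν := continuousOn_inner_inv_norm_smul hθ (by simpa using hr.ne)
  rw [← integral_const_mul, massSurfaceIntegral_eq_integral_massIntegrand,
    ← integral_sub (hM.integrableOn_sphere hr) ((hθν.integrableOn_sphere hr).const_mul _)]
  rfl

lemma weylMass_sub_eq_integral {G₁ G₀ : EuclideanSpace ℝ (Fin n) → Matrix (Fin n) (Fin n) ℝ}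
    {θ₁ θ₀ : EuclideanSpace ℝ (Fin n) → EuclideanSpace ℝ (Fin n)} {r : ℝ} (hr : 0 < r)
    (hM₁ : ContinuousOn (massIntegrand n G₁) (sphere 0 r)) (hθ₁ : ContinuousOn θ₁ (sphere 0 r))
    (hM₀ : ContinuousOn (massIntegrand n G₀) (sphere 0 r)) (hθ₀ : ContinuousOn θ₀ (sphere 0 r)) :
    (massSurfaceIntegral n G₁ r -
        2 * ((n : ℝ) - 1) * ∫ x in sphere 0 r, inner ℝ (θ₁ x) (‖x‖⁻¹ • x) ∂μH[(n : ℝ) - 1]) -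
      (massSurfaceIntegral n G₀ r -
        2 * ((n : ℝ) - 1) * ∫ x in sphere 0 r, inner ℝ (θ₀ x) (‖x‖⁻¹ • x) ∂μH[(n : ℝ) - 1]) =
      ∫ x in sphere 0 r, (weylMassIntegrand n G₁ θ₁ x - weylMassIntegrand n G₀ θ₀ x)
        ∂μH[(n : ℝ) - 1] := by
  have hs : (0 : EuclideanSpace ℝ (Fin n)) ∉ sphere 0 r := by simpa using hr.ne
  rw [massSurfaceIntegral_sub_integral_inner hr hM₁ hθ₁,
    massSurfaceIntegral_sub_integral_inner hr hM₀ hθ₀, integral_sub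
      ((continuousOn_weylMassIntegrand hM₁ hθ₁ hs).integrableOn_sphere hr)
      ((continuousOn_weylMassIntegrand hM₀ hθ₀ hs).integrableOn_sphere hr)]

end Continuity

theorem weyl_mass_conformal_invariance_general (n : ℕ) (R C ε τ : ℝ)
    (hR : 0 < R) (hε : 0 < ε) (hτ : ((n : ℝ) - 2) / 2 < τ)
    (a : EuclideanSpace ℝ (Fin n) → Matrix (Fin n) (Fin n) ℝ)
    (ha_diff : ∀ (i j : Fin n) (x : EuclideanSpace ℝ (Fin n)), R ≤ ‖x‖ →
      DifferentiableAt ℝ (fun y => a y i j) x)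
    (ha_C1 : ∀ i j : Fin n, ContinuousOn (fun x => fderiv ℝ (fun y => a y i j) x)
      {x : EuclideanSpace ℝ (Fin n) | R ≤ ‖x‖})
    (ha_bound : ∀ (i j : Fin n) (x : EuclideanSpace ℝ (Fin n)), R ≤ ‖x‖ →
      |a x i j| ≤ C * ‖x‖ ^ (-τ))
    (ha_deriv : ∀ (i j k : Fin n) (x : EuclideanSpace ℝ (Fin n)), R ≤ ‖x‖ →
      |fderiv ℝ (fun y => a y i j) x (EuclideanSpace.single k 1)| ≤ C * ‖x‖ ^ (-τ - 1))
    (f : EuclideanSpace ℝ (Fin n) → ℝ)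
    (hf_diff : ∀ x : EuclideanSpace ℝ (Fin n), R ≤ ‖x‖ → DifferentiableAt ℝ f x)
    (hf_C1 : ContinuousOn (fun x => fderiv ℝ f x) {x : EuclideanSpace ℝ (Fin n) | R ≤ ‖x‖})
    (hf_low : ∀ x : EuclideanSpace ℝ (Fin n), R ≤ ‖x‖ → ε ≤ f x)
    (hf_one : ∀ x : EuclideanSpace ℝ (Fin n), R ≤ ‖x‖ → |f x - 1| ≤ C * ‖x‖ ^ (-τ))
    (hf_grad : ∀ x : EuclideanSpace ℝ (Fin n), R ≤ ‖x‖ →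
      ‖gradient f x‖ ≤ C * ‖x‖ ^ (-τ - 1))
    (θ : EuclideanSpace ℝ (Fin n) → EuclideanSpace ℝ (Fin n))
    (hθ_cont : ContinuousOn θ {x : EuclideanSpace ℝ (Fin n) | R ≤ ‖x‖}) :
    Tendsto
      (fun r : ℝ =>
        (massSurfaceIntegral n (fun x => f x • ((1 : Matrix (Fin n) (Fin n) ℝ) + a x)) r -
          2 * ((n : ℝ) - 1) *
            ∫ x in Metric.sphere (0 : EuclideanSpace ℝ (Fin n)) r,
              (inner ℝ (θ x - (1 / (2 * f x)) • gradient f x) (‖x‖⁻¹ • x) : ℝ)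
              ∂(μH[(n : ℝ) - 1])) -
        (massSurfaceIntegral n (fun x => (1 : Matrix (Fin n) (Fin n) ℝ) + a x) r -
          2 * ((n : ℝ) - 1) *
            ∫ x in Metric.sphere (0 : EuclideanSpace ℝ (Fin n)) r,
              (inner ℝ (θ x) (‖x‖⁻¹ • x) : ℝ) ∂(μH[(n : ℝ) - 1])))
      atTop (nhds 0) := by
  set s := {x : EuclideanSpace ℝ (Fin n) | R ≤ ‖x‖}
  have hs : 0 ∉ s := by simpa [s] using hR
  have hM₁ : ContinuousOn (massIntegrand n fun x => f x • (1 + a x)) s :=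
    continuousOn_massIntegrand_smul hf_diff hf_C1 (fun x hx i j => (ha_diff i j x hx).const_add _)
      (by simpa only [fderiv_one_add_matrix_apply] using ha_C1) hs
  have hM₀ : ContinuousOn (massIntegrand n fun x => 1 + a x) s := by
    simpa only [massIntegrand_one_add] using continuousOn_massIntegrand ha_C1 hs
  have hθ₁ : ContinuousOn (fun x => θ x - (1 / (2 * f x)) • gradient f x) s :=
    hθ_cont.sub <| (continuousOn_const.div (continuousOn_const.mul fun x hx =>
      (hf_diff x hx).continuousAt.continuousWithinAt) fun x hx =>
        (mul_pos two_pos (hε.trans_le (hf_low x hx))).ne').smul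
      ((InnerProductSpace.toDual ℝ _).symm.continuous.comp_continuousOn hf_C1)
  have hbound : ∀ x, R ≤ ‖x‖ →
      |weylMassIntegrand n (fun y => f y • (1 + a y))
          (fun y => θ y - (1 / (2 * f y)) • gradient f y) x -
        weylMassIntegrand n (fun y => 1 + a y) θ x| ≤
      C ^ 2 * (4 * n ^ 2 + |(n : ℝ) - 1| / ε) * ‖x‖ ^ (-(2 * τ + 1)) := fun x hx => by
    refine (abs_weylMassIntegrand_conformal_sub_le (hf_diff x hx) (fun i j => ha_diff i j x hx)
      hε (hf_low x hx) (hf_one x hx) ?_ (fun i j => ha_bound i j x hx)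
      fun i j k => ha_deriv i j k x hx).trans_eq ?_
    · simpa only [gradient, LinearIsometryEquiv.norm_map] using hf_grad x hx
    · rw [show -(2 * τ + 1) = -τ + (-τ - 1) by ring, Real.rpow_add (hR.trans_le hx)]
      ring
  refine (tendsto_setIntegral_sphere_of_abs_le (by linarith) hbound).congr' ?_
  filter_upwards [eventually_ge_atTop R] with r hr
  have hsr : sphere 0 r ⊆ s := fun x hx => by simp [s, mem_sphere_zero_iff_norm.mp hx, hr]
  exact (weylMass_sub_eq_integral (hR.trans_le hr) (hM₁.mono hsr) (hθ₁.mono hsr)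
    (hM₀.mono hsr) (hθ_cont.mono hsr)).symm

/-- coordinate computation behind Proposition 20: conformal
invariance of the mass of an asymptotically flat Weyl structure. With
`g = δ + a` asymptotically flat of order `τ > (n-2)/2`, `f` asymptotic to `1`
and bounded below by `ε > 0`, and a Lee form `θ = O(‖x‖^(-τ-1))`, the
difference of the two mass boundary terms
`[𝔪_r(f·g) - 2(n-1)∫_{S_r}⟨θ - ∇f/(2f), ν⟩] - [𝔪_r(g) - 2(n-1)∫_{S_r}⟨θ, ν⟩]`
tends to `0` as `r → ∞`. -/
theorem weyl_mass_conformal_invariance (n : ℕ) (hn : 3 ≤ n) (R C ε τ : ℝ)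
    (hR : 0 < R) (hC : 0 ≤ C) (hε : 0 < ε) (hτ : ((n : ℝ) - 2) / 2 < τ)
    (a : EuclideanSpace ℝ (Fin n) → Matrix (Fin n) (Fin n) ℝ)
    (ha_diff : ∀ (i j : Fin n) (x : EuclideanSpace ℝ (Fin n)), R ≤ ‖x‖ →
      DifferentiableAt ℝ (fun y => a y i j) x)
    (ha_C1 : ∀ i j : Fin n, ContinuousOn (fun x => fderiv ℝ (fun y => a y i j) x)
      {x : EuclideanSpace ℝ (Fin n) | R ≤ ‖x‖})
    (ha_bound : ∀ (i j : Fin n) (x : EuclideanSpace ℝ (Fin n)), R ≤ ‖x‖ →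
      |a x i j| ≤ C * ‖x‖ ^ (-τ))
    (ha_deriv : ∀ (i j k : Fin n) (x : EuclideanSpace ℝ (Fin n)), R ≤ ‖x‖ →
      |fderiv ℝ (fun y => a y i j) x (EuclideanSpace.single k 1)| ≤ C * ‖x‖ ^ (-τ - 1))
    (f : EuclideanSpace ℝ (Fin n) → ℝ)
    (hf_diff : ∀ x : EuclideanSpace ℝ (Fin n), R ≤ ‖x‖ → DifferentiableAt ℝ f x)
    (hf_C1 : ContinuousOn (fun x => fderiv ℝ f x) {x : EuclideanSpace ℝ (Fin n) | R ≤ ‖x‖})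
    (hf_low : ∀ x : EuclideanSpace ℝ (Fin n), R ≤ ‖x‖ → ε ≤ f x)
    (hf_one : ∀ x : EuclideanSpace ℝ (Fin n), R ≤ ‖x‖ → |f x - 1| ≤ C * ‖x‖ ^ (-τ))
    (hf_grad : ∀ x : EuclideanSpace ℝ (Fin n), R ≤ ‖x‖ →
      ‖gradient f x‖ ≤ C * ‖x‖ ^ (-τ - 1))
    (θ : EuclideanSpace ℝ (Fin n) → EuclideanSpace ℝ (Fin n))
    (hθ_cont : ContinuousOn θ {x : EuclideanSpace ℝ (Fin n) | R ≤ ‖x‖})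
    (hθ_bound : ∀ x : EuclideanSpace ℝ (Fin n), R ≤ ‖x‖ → ‖θ x‖ ≤ C * ‖x‖ ^ (-τ - 1)) :
    Tendsto
      (fun r : ℝ =>
        (massSurfaceIntegral n (fun x => f x • ((1 : Matrix (Fin n) (Fin n) ℝ) + a x)) r -
          2 * ((n : ℝ) - 1) *
            ∫ x in Metric.sphere (0 : EuclideanSpace ℝ (Fin n)) r,
              (inner ℝ (θ x - (1 / (2 * f x)) • gradient f x) (‖x‖⁻¹ • x) : ℝ)
              ∂(μH[(n : ℝ) - 1])) -
        (massSurfaceIntegral n (fun x => (1 : Matrix (Fin n) (Fin n) ℝ) + a x) r -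
          2 * ((n : ℝ) - 1) *
            ∫ x in Metric.sphere (0 : EuclideanSpace ℝ (Fin n)) r,
              (inner ℝ (θ x) (‖x‖⁻¹ • x) : ℝ) ∂(μH[(n : ℝ) - 1])))
      atTop (nhds 0) :=
  weyl_mass_conformal_invariance_general n R C ε τ hR hε hτ a ha_diff ha_C1 ha_bound ha_deriv f
    hf_diff hf_C1 hf_low hf_one hf_grad θ hθ_cont
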